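/- arXiv:1110.4312 — 3 statements merged into one kernel-verified Lean document; each statement's English description precedes it below -/
import Mathlib

section
/- The cascade map G is monotone: if a, b ∈ [0,1]^ℕ satisfy a_j ≤ b_j for all j ∈ ℕ, then G_j(a) ≤ G_j(b) for all j ∈ ℕ. -/
/-!
Each binomial tail `x ↦ P(Bin(j, x) ≥ M)` is nondecreasing on `[0,1]`: the derivatives of the
binomial terms telescope to `M C(j,M) x^(M-1) (1-x)^(j-M) ≥ 0`. The cascade map is a combination
of these tails with nonnegative weights `Q_{kj} (1-ρ⁰_{j'k}) P_{j'k} / (Q⁻_j P⁺_k)`, plus terms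
not depending on the argument; all inner sums are bounded, so every series involved converges
and can be compared termwise.
-/

/-- In-degree marginal `P⁺_k = Σ_j P_{jk}` of the node-type distribution. -/
noncomputable def Pplus (P : ℕ → ℕ → ℝ) (k : ℕ) : ℝ := ∑' j, P j k

/-- In-degree marginal `Q⁻_j = Σ_k Q_{kj}` of the edge-type distribution. -/
noncomputable def Qminus (Q : ℕ → ℕ → ℝ) (j : ℕ) : ℝ := ∑' k, Q k j

/-- Initially defaulted edge fractions `σ⁰_{kj} = Σ_{j'} ρ⁰_{j'k} P_{j'k} / P⁺_k`. -/
noncomputable def sigma0 (P ρ0 : ℕ → ℕ → ℝ) (k : ℕ) : ℝ :=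
  (∑' j', ρ0 j' k * P j' k) / Pplus P k

/-- Binomial tail `Σ_{m=M}^{j} C(j,m) x^m (1−x)^{j−m}`. -/
noncomputable def binomialTail (j M : ℕ) (x : ℝ) : ℝ :=
  ∑ m ∈ Finset.Icc M j, (j.choose m : ℝ) * x ^ m * (1 - x) ^ (j - m)

/-- The cascade map `G` of the extended Gai–Kapadia model:
`G_j(a) = (1/Q⁻_j) Σ_k Q_{kj} [σ⁰_{kj} + Σ_{j'} (1−ρ⁰_{j'k}) (P_{j'k}/P⁺_k)
  Σ_{m=M_{j'k}}^{j'} C(j',m) a_{j'}^m (1−a_{j'})^{j'−m}]`. -/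
noncomputable def cascadeMap (P Q ρ0 : ℕ → ℕ → ℝ) (M : ℕ → ℕ → ℕ)
    (a : ℕ → ℝ) (j : ℕ) : ℝ :=
  (1 / Qminus Q j) * ∑' k, Q k j * (sigma0 P ρ0 k +
    ∑' j', (1 - ρ0 j' k) * (P j' k / Pplus P k) * binomialTail j' (M j' k) (a j'))

open Set

noncomputable def binomialTailDeriv (j M : ℕ) (x : ℝ) : ℝ :=
  j.choose M * M * x ^ (M - 1) * (1 - x) ^ (j - M)

lemma binomialTailDeriv_nonneg (j M : ℕ) {x : ℝ} (hx : x ∈ Icc (0 : ℝ) 1) :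
    0 ≤ binomialTailDeriv j M x := by
  have h0 := hx.1
  have h1 : 0 ≤ 1 - x := sub_nonneg.2 hx.2
  unfold binomialTailDeriv
  positivity

lemma binomialTailDeriv_eq_zero_of_lt {j M : ℕ} (h : j < M) (x : ℝ) :
    binomialTailDeriv j M x = 0 := by
  simp [binomialTailDeriv, Nat.choose_eq_zero_of_lt h]

/-- Because `(m+1) C(j,m+1) = (j-m) C(j,m)`, the derivatives of the binomial terms telescope. -/
lemma hasDerivAt_binomial_term (j m : ℕ) (x : ℝ) :
    HasDerivAt (fun y : ℝ => (j.choose m : ℝ) * y ^ m * (1 - y) ^ (j - m))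
      (binomialTailDeriv j m x - binomialTailDeriv j (m + 1) x) x := by
  have hpow : HasDerivAt (fun y : ℝ => y ^ m) (m * x ^ (m - 1)) x := by
    simpa using hasDerivAt_pow m x
  have hcompl : HasDerivAt (fun y : ℝ => (1 - y) ^ (j - m))
      (((j - m : ℕ) : ℝ) * (1 - x) ^ (j - m - 1) * (-1)) x :=
    ((hasDerivAt_id x).const_sub 1).fun_pow (j - m)
  refine ((hpow.const_mul (j.choose m : ℝ)).fun_mul hcompl).congr_deriv ?_
  have hchoose : (j.choose (m + 1) : ℝ) * (m + 1) = j.choose m * ((j - m : ℕ) : ℝ) := by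
    exact_mod_cast Nat.choose_succ_right_eq j m
  simp only [binomialTailDeriv, Nat.add_sub_cancel, Nat.sub_sub]
  push_cast
  linear_combination x ^ m * (1 - x) ^ (j - (m + 1)) * hchoose

lemma sum_Icc_binomialTailDeriv_sub (j M : ℕ) (x : ℝ) :
    ∑ m ∈ Finset.Icc M j, (binomialTailDeriv j m x - binomialTailDeriv j (m + 1) x) =
      binomialTailDeriv j M x := by
  rcases le_or_gt M j with hMj | hjM
  · have h := Finset.sum_Icc_sub hMj fun m => -binomialTailDeriv j m x
    simp only [neg_sub_neg] at h
    rw [h, binomialTailDeriv_eq_zero_of_lt j.lt_succ_self, sub_zero]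
  · rw [Finset.Icc_eq_empty_of_lt hjM, Finset.sum_empty, binomialTailDeriv_eq_zero_of_lt hjM]

lemma hasDerivAt_binomialTail (j M : ℕ) (x : ℝ) :
    HasDerivAt (binomialTail j M) (binomialTailDeriv j M x) x := by
  rw [← sum_Icc_binomialTailDeriv_sub]
  exact HasDerivAt.fun_sum fun m _ => hasDerivAt_binomial_term j m x

lemma binomialTail_monotoneOn (j M : ℕ) : MonotoneOn (binomialTail j M) (Icc 0 1) := by
  have hderiv := hasDerivAt_binomialTail j M
  refine monotoneOn_of_hasDerivWithinAt_nonneg (convex_Icc 0 1)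
    (fun x _ => (hderiv x).continuousAt.continuousWithinAt)
    (fun x _ => (hderiv x).hasDerivWithinAt)
    fun x hx => binomialTailDeriv_nonneg j M (interior_subset hx)

lemma binomialTail_nonneg (j M : ℕ) {x : ℝ} (hx : x ∈ Icc (0 : ℝ) 1) :
    0 ≤ binomialTail j M x := by
  have h0 := hx.1
  have h1 : 0 ≤ 1 - x := sub_nonneg.2 hx.2
  unfold binomialTail
  positivity

lemma binomialTail_le_one (j M : ℕ) {x : ℝ} (hx : x ∈ Icc (0 : ℝ) 1) :
    binomialTail j M x ≤ 1 := by
  have h0 := hx.1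
  have h1 : 0 ≤ 1 - x := sub_nonneg.2 hx.2
  calc binomialTail j M x
      ≤ ∑ m ∈ Finset.range (j + 1), (j.choose m : ℝ) * x ^ m * (1 - x) ^ (j - m) := by
        refine Finset.sum_le_sum_of_subset_of_nonneg
          (fun m hm => Finset.mem_range_succ_iff.2 (Finset.mem_Icc.1 hm).2)
          fun m _ _ => by positivity
    _ = (x + (1 - x)) ^ j := by
        rw [add_pow]
        exact Finset.sum_congr rfl fun m _ => by ring
    _ = 1 := by ring

lemma tsum_le_tsum_of_nonneg_of_dominated {ι : Type*} {f g w : ι → ℝ} (hf : ∀ i, 0 ≤ f i)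
    (hfg : ∀ i, f i ≤ g i) (hgw : ∀ i, g i ≤ w i) (hw : Summable w) :
    ∑' i, f i ≤ ∑' i, g i :=
  (hw.of_nonneg_of_le hf fun i => (hfg i).trans (hgw i)).tsum_le_tsum hfg
    (hw.of_nonneg_of_le (fun i => (hf i).trans (hfg i)) hgw)

section Cascade

variable {P ρ0 : ℕ → ℕ → ℝ}

noncomputable def contagionFraction (P ρ0 : ℕ → ℕ → ℝ) (M : ℕ → ℕ → ℕ) (a : ℕ → ℝ) (k : ℕ) :
    ℝ :=
  ∑' j', (1 - ρ0 j' k) * (P j' k / Pplus P k) * binomialTail j' (M j' k) (a j')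

lemma cascadeMap_eq (Q : ℕ → ℕ → ℝ) (M : ℕ → ℕ → ℕ) (a : ℕ → ℝ) (j : ℕ) :
    cascadeMap P Q ρ0 M a j =
      (1 / Qminus Q j) * ∑' k, Q k j * (sigma0 P ρ0 k + contagionFraction P ρ0 M a k) :=
  rfl

lemma div_Pplus_nonneg (hP : ∀ j k, 0 ≤ P j k) (j k : ℕ) : 0 ≤ P j k / Pplus P k :=
  div_nonneg (hP j k) (tsum_nonneg fun j' => hP j' k)

lemma tsum_div_Pplus_le_one (P : ℕ → ℕ → ℝ) (k : ℕ) : ∑' j, P j k / Pplus P k ≤ 1 := by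
  rw [tsum_div_const]
  exact div_self_le_one _

lemma sigma0_mem_Icc (hP : ∀ j k, 0 ≤ P j k) (hPk : ∀ k, Summable fun j => P j k)
    (hρ0 : ∀ j k, ρ0 j k ∈ Icc (0 : ℝ) 1) (k : ℕ) : sigma0 P ρ0 k ∈ Icc (0 : ℝ) 1 := by
  have hterm : ∀ j, 0 ≤ ρ0 j k * P j k ∧ ρ0 j k * P j k ≤ P j k := fun j =>
    ⟨mul_nonneg (hρ0 j k).1 (hP j k), mul_le_of_le_one_left (hP j k) (hρ0 j k).2⟩
  refine ⟨div_nonneg (tsum_nonneg fun j => (hterm j).1) (tsum_nonneg fun j => hP j k),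
    (div_le_div_of_nonneg_right ?_ (tsum_nonneg fun j => hP j k)).trans (div_self_le_one _)⟩
  exact tsum_le_tsum_of_nonneg_of_dominated (fun j => (hterm j).1) (fun j => (hterm j).2)
    (fun _ => le_rfl) (hPk k)

lemma contagionFraction_term_mem_Icc (hP : ∀ j k, 0 ≤ P j k) (hρ0 : ∀ j k, ρ0 j k ∈ Icc (0 : ℝ) 1)
    (M : ℕ → ℕ → ℕ) {x : ℝ} (hx : x ∈ Icc (0 : ℝ) 1) (j k : ℕ) :
    (1 - ρ0 j k) * (P j k / Pplus P k) * binomialTail j (M j k) x ∈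
      Icc 0 (P j k / Pplus P k) := by
  have hw := div_Pplus_nonneg hP j k
  have hc : 0 ≤ 1 - ρ0 j k := sub_nonneg.2 (hρ0 j k).2
  have hcw : (1 - ρ0 j k) * (P j k / Pplus P k) ≤ P j k / Pplus P k :=
    mul_le_of_le_one_left hw (by linarith [(hρ0 j k).1])
  exact ⟨mul_nonneg (mul_nonneg hc hw) (binomialTail_nonneg _ _ hx),
    (mul_le_of_le_one_right (mul_nonneg hc hw) (binomialTail_le_one _ _ hx)).trans hcw⟩

lemma contagionFraction_mem_Icc (hP : ∀ j k, 0 ≤ P j k) (hPk : ∀ k, Summable fun j => P j k)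
    (hρ0 : ∀ j k, ρ0 j k ∈ Icc (0 : ℝ) 1) (M : ℕ → ℕ → ℕ) {a : ℕ → ℝ}
    (ha : ∀ j, a j ∈ Icc (0 : ℝ) 1) (k : ℕ) : contagionFraction P ρ0 M a k ∈ Icc (0 : ℝ) 1 := by
  have hterm := fun j => contagionFraction_term_mem_Icc hP hρ0 M (ha j) j k
  refine ⟨tsum_nonneg fun j => (hterm j).1, le_trans ?_ (tsum_div_Pplus_le_one P k)⟩
  exact tsum_le_tsum_of_nonneg_of_dominated (fun j => (hterm j).1) (fun j => (hterm j).2)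
    (fun _ => le_rfl) ((hPk k).div_const _)

lemma contagionFraction_mono (hP : ∀ j k, 0 ≤ P j k) (hPk : ∀ k, Summable fun j => P j k)
    (hρ0 : ∀ j k, ρ0 j k ∈ Icc (0 : ℝ) 1) (M : ℕ → ℕ → ℕ) {a b : ℕ → ℝ}
    (ha : ∀ j, a j ∈ Icc (0 : ℝ) 1) (hb : ∀ j, b j ∈ Icc (0 : ℝ) 1) (hab : ∀ j, a j ≤ b j)
    (k : ℕ) : contagionFraction P ρ0 M a k ≤ contagionFraction P ρ0 M b k := by
  refine tsum_le_tsum_of_nonneg_of_dominated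
    (fun j => (contagionFraction_term_mem_Icc hP hρ0 M (ha j) j k).1) (fun j => ?_)
    (fun j => (contagionFraction_term_mem_Icc hP hρ0 M (hb j) j k).2) ((hPk k).div_const _)
  have hcoef : 0 ≤ (1 - ρ0 j k) * (P j k / Pplus P k) :=
    mul_nonneg (sub_nonneg.2 (hρ0 j k).2) (div_Pplus_nonneg hP j k)
  exact mul_le_mul_of_nonneg_left (binomialTail_monotoneOn j (M j k) (ha j) (hb j) (hab j)) hcoef

end Cascade

theorem cascadeMap_monotone_general
    (P Q ρ0 : ℕ → ℕ → ℝ) (M : ℕ → ℕ → ℕ)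
    (hP : ∀ j k, 0 ≤ P j k) (hPsum : HasSum (fun p : ℕ × ℕ => P p.1 p.2) 1)
    (hQ : ∀ k j, 0 ≤ Q k j) (hQsum : HasSum (fun p : ℕ × ℕ => Q p.1 p.2) 1)
    (hρ0 : ∀ j k, ρ0 j k ∈ Set.Icc (0 : ℝ) 1)
    (a b : ℕ → ℝ) (ha : ∀ j, a j ∈ Set.Icc (0 : ℝ) 1)
    (hb : ∀ j, b j ∈ Set.Icc (0 : ℝ) 1)
    (hab : ∀ j, a j ≤ b j) :
    ∀ j, cascadeMap P Q ρ0 M a j ≤ cascadeMap P Q ρ0 M b j := by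
  intro j
  have hPk : ∀ k, Summable fun j' => P j' k := fun k =>
    hPsum.summable.comp_injective (Prod.mk_left_injective k)
  have hQj : Summable fun k => Q k j := hQsum.summable.comp_injective (Prod.mk_left_injective j)
  have hσ := sigma0_mem_Icc hP hPk hρ0
  have hCa := contagionFraction_mem_Icc hP hPk hρ0 M ha
  have hCb := contagionFraction_mem_Icc hP hPk hρ0 M hb
  rw [cascadeMap_eq, cascadeMap_eq]
  refine mul_le_mul_of_nonneg_left ?_ (one_div_nonneg.2 (tsum_nonneg fun k => hQ k j))
  refine tsum_le_tsum_of_nonneg_of_dominated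
    (fun k => mul_nonneg (hQ k j) (add_nonneg (hσ k).1 (hCa k).1))
    (fun k => mul_le_mul_of_nonneg_left
      (add_le_add_right (contagionFraction_mono hP hPk hρ0 M ha hb hab k) _) (hQ k j))
    (fun k => ?_) (hQj.mul_right 2)
  exact mul_le_mul_of_nonneg_left (by linarith [(hσ k).2, (hCb k).2]) (hQ k j)

/-- The cascade map `G` is monotone for the pointwise order on `[0,1]^ℕ`. -/
theorem cascadeMap_monotone
    (P Q ρ0 : ℕ → ℕ → ℝ) (M : ℕ → ℕ → ℕ)
    (hP : ∀ j k, 0 ≤ P j k) (hPsum : HasSum (fun p : ℕ × ℕ => P p.1 p.2) 1)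
    (hPplus : ∀ k, 0 < Pplus P k)
    (hQ : ∀ k j, 0 ≤ Q k j) (hQsum : HasSum (fun p : ℕ × ℕ => Q p.1 p.2) 1)
    (hQminus : ∀ j, 0 < Qminus Q j)
    (hρ0 : ∀ j k, ρ0 j k ∈ Set.Icc (0 : ℝ) 1)
    (hM : ∀ j k, 1 ≤ M j k)
    (a b : ℕ → ℝ) (ha : ∀ j, a j ∈ Set.Icc (0 : ℝ) 1)
    (hb : ∀ j, b j ∈ Set.Icc (0 : ℝ) 1)
    (hab : ∀ j, a j ≤ b j) :
    ∀ j, cascadeMap P Q ρ0 M a j ≤ cascadeMap P Q ρ0 M b j :=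
  cascadeMap_monotone_general P Q ρ0 M hP hPsum hQ hQsum hρ0 a b ha hb hab
end

section
/- Suppose all initial default fractions vanish, ρ⁰_{jk} = 0 for all j,k (hence σ⁰_{kj} = 0). Then for every pair j, j' ∈ ℕ, the one-variable function t ↦ G_j(t·e_{j'}) (where e_{j'} ∈ [0,1]^ℕ is the sequence equal to 1 in coordinate j' and 0 elsewhere) is differentiable at t = 0 with derivative D_{jj'} = Σ_k j'·Q_{kj}·P_{j'k}·𝟙{M_{j'k} = 1} / (Q⁻_j·P⁺_k). -/
/-! With no initial defaults and only coordinate `j'` perturbed, every binomial tail of a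
coordinate `i ≠ j'` is evaluated at `0`, where it vanishes because all thresholds are `≥ 1`. So
`G_j(t e_{j'}) = (1/Q⁻_j) Σ_k Q_{kj} (P_{j'k}/P⁺_k) B_{j',M_{j'k}}(t)`. Since `B_{j',M} ≡ 0` for
`M > j'`, only the finitely many functions `B_{j',1}, …, B_{j',j'}` occur: the series is a finite
linear combination of them and can be differentiated termwise. Finally `B'_{j',M}(0) = j'·𝟙{M = 1}`,
as the Bernstein term `x^m (1-x)^{j'-m}` vanishes to second order at `0` once `m ≥ 2`. -/

section FiniteFamily

variable {𝕜 α β : Type*} [NontriviallyNormedField 𝕜] [CompleteSpace 𝕜]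
  {w : α → 𝕜} {φ : α → β} {s : Finset β}

theorem tsum_mul_comp_eq_sum_of_finite (hw : Summable w) {g : β → 𝕜}
    (hg : ∀ a, φ a ∉ s → g (φ a) = 0) :
    ∑' a, w a * g (φ a) = ∑ b ∈ s, (∑' a, (φ ⁻¹' {b}).indicator w a) * g b := by
  classical
  have hterm : ∀ a, w a * g (φ a) = ∑ b ∈ s, (φ ⁻¹' {b}).indicator w a * g b := by
    intro a
    by_cases ha : φ a ∈ s
    · rw [Finset.sum_eq_single_of_mem (φ a) ha fun b _ hne => by simp [Ne.symm hne]]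
      simp
    · rw [hg a ha, mul_zero, Finset.sum_eq_zero fun b hb => ?_]
      simp [show φ a ≠ b from fun h => ha (h ▸ hb)]
  rw [tsum_congr hterm, Summable.tsum_finsetSum fun b _ => (hw.indicator _).mul_right _]
  simp_rw [tsum_mul_right]

theorem hasDerivAt_tsum_mul_comp_of_finite (hw : Summable w) {f : β → 𝕜 → 𝕜} {f' : β → 𝕜}
    {x : 𝕜} (hf : ∀ b ∈ s, HasDerivAt (f b) (f' b) x)
    (hφ : ∀ a, φ a ∉ s → f (φ a) = 0 ∧ f' (φ a) = 0) :
    HasDerivAt (fun t => ∑' a, w a * f (φ a) t) (∑' a, w a * f' (φ a)) x := by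
  have hfun : (fun t => ∑' a, w a * f (φ a) t) =
      fun t => ∑ b ∈ s, (∑' a, (φ ⁻¹' {b}).indicator w a) * f b t :=
    funext fun t => tsum_mul_comp_eq_sum_of_finite (g := fun b => f b t) hw
      fun a ha => congrFun (hφ a ha).1 t
  rw [hfun, tsum_mul_comp_eq_sum_of_finite hw fun a ha => (hφ a ha).2]
  exact HasDerivAt.fun_sum fun b hb => (hf b hb).const_mul _

end FiniteFamily

theorem binomialTail_apply_zero {n M : ℕ} (hM : 1 ≤ M) : binomialTail n M 0 = 0 :=
  Finset.sum_eq_zero fun m hm => by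
    rw [zero_pow (by grind), mul_zero, zero_mul]

theorem binomialTail_of_lt {n M : ℕ} (h : n < M) : binomialTail n M = 0 := by
  ext x
  simp [binomialTail, Finset.Icc_eq_empty_of_lt h]

theorem hasDerivAt_choose_mul_pow_mul_one_sub_pow_zero (n : ℕ) {m : ℕ} (hm : 1 ≤ m) :
    HasDerivAt (fun x : ℝ => (n.choose m : ℝ) * x ^ m * (1 - x) ^ (n - m))
      (if m = 1 then (n : ℝ) else 0) 0 := by
  have h := (((hasDerivAt_pow m (0 : ℝ)).const_mul (n.choose m : ℝ)).fun_mul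
    (((hasDerivAt_id (0 : ℝ)).const_sub 1).fun_pow (n - m)))
  refine h.congr_deriv ?_
  obtain rfl | hm := hm.eq_or_lt
  · simp
  · simp [zero_pow (by omega : m - 1 ≠ 0), zero_pow (by omega : m ≠ 0), hm.ne']

theorem hasDerivAt_binomialTail_zero (n : ℕ) {M : ℕ} (hM : 1 ≤ M) :
    HasDerivAt (binomialTail n M) (n * if M = 1 then 1 else 0) 0 := by
  have h := HasDerivAt.fun_sum fun m (hm : m ∈ Finset.Icc M n) =>
    hasDerivAt_choose_mul_pow_mul_one_sub_pow_zero n (hM.trans (Finset.mem_Icc.mp hm).1)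
  refine h.congr_deriv ?_
  rw [Finset.sum_ite_eq']
  obtain rfl | hn := n.eq_zero_or_pos
  · simp
  · split_ifs <;> grind

theorem cascadeMap_zero_single (P Q : ℕ → ℕ → ℝ) {M : ℕ → ℕ → ℕ} (hM : ∀ j k, 1 ≤ M j k)
    (j j' : ℕ) (t : ℝ) :
    cascadeMap P Q 0 M (fun i => if i = j' then t else 0) j =
      1 / Qminus Q j * ∑' k, Q k j * (P j' k / Pplus P k) * binomialTail j' (M j' k) t := by
  simp only [cascadeMap, sigma0, Pi.zero_apply, zero_mul, tsum_zero, zero_div, sub_zero,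
    one_mul, zero_add]
  congr 1
  refine tsum_congr fun k => ?_
  rw [tsum_eq_single j' fun i hi => by simp [hi, binomialTail_apply_zero (hM i k)]]
  simp [mul_assoc]

theorem summable_mul_div_Pplus {P : ℕ → ℕ → ℝ} (hP : ∀ j k, 0 ≤ P j k)
    (hPk : ∀ k, Summable fun i => P i k) {w : ℕ → ℝ} (hw : Summable w) (j : ℕ) :
    Summable fun k => w k * (P j k / Pplus P k) := by
  refine hw.abs.of_norm_bounded fun k => ?_
  have hPplus : 0 ≤ Pplus P k := tsum_nonneg fun i => hP i k
  rw [Real.norm_eq_abs, abs_mul, abs_of_nonneg (div_nonneg (hP j k) hPplus)]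
  exact mul_le_of_le_one_right (abs_nonneg _)
    (div_le_one_of_le₀ ((hPk k).le_tsum j fun i _ => hP i k) hPplus)

theorem cascadeMap_hasDerivAt_zero_general
    (P Q ρ0 : ℕ → ℕ → ℝ) (M : ℕ → ℕ → ℕ)
    (hP : ∀ j k, 0 ≤ P j k) (hPsum : HasSum (fun p : ℕ × ℕ => P p.1 p.2) 1)
    (hQsum : HasSum (fun p : ℕ × ℕ => Q p.1 p.2) 1)
    (hρ0 : ∀ j k, ρ0 j k = 0)
    (hM : ∀ j k, 1 ≤ M j k) :
    ∀ j j' : ℕ,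
      HasDerivAt
        (fun t : ℝ => cascadeMap P Q ρ0 M (fun i => if i = j' then t else 0) j)
        (∑' k, (j' : ℝ) * Q k j * P j' k * (if M j' k = 1 then (1 : ℝ) else 0)
          / (Qminus Q j * Pplus P k)) 0 := by
  intro j j'
  obtain rfl : ρ0 = 0 := funext₂ hρ0
  have hQj : Summable fun k => Q k j :=
    hQsum.summable.comp_injective fun _ _ h => (Prod.mk.inj h).1
  have hPk (k : ℕ) : Summable fun i => P i k :=
    hPsum.summable.comp_injective fun _ _ h => (Prod.mk.inj h).1
  have hvanish (k : ℕ) (hk : M j' k ∉ Finset.Icc 1 j') :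
      binomialTail j' (M j' k) = 0 ∧ (j' : ℝ) * (if M j' k = 1 then 1 else 0) = 0 := by
    have hlt : j' < M j' k := by grind
    refine ⟨binomialTail_of_lt hlt, ?_⟩
    obtain rfl | hj' := j'.eq_zero_or_pos
    · simp
    · simp [show M j' k ≠ 1 by omega]
  have hG := (hasDerivAt_tsum_mul_comp_of_finite (φ := (M j' ·)) (s := Finset.Icc 1 j')
    (summable_mul_div_Pplus hP hPk hQj j')
    (fun m hm => hasDerivAt_binomialTail_zero j' (Finset.mem_Icc.mp hm).1) hvanish).const_mul
    (1 / Qminus Q j)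
  simp only [cascadeMap_zero_single P Q hM]
  refine hG.congr_deriv ?_
  rw [← tsum_mul_left]
  exact tsum_congr fun k => by ring

/-- With vanishing initial defaults, the cascade map `G` is differentiable at
`0` along each coordinate direction `e_{j'}`, with derivative
`D_{jj'} = Σ_k j' Q_{kj} P_{j'k} 𝟙{M_{j'k} = 1} / (Q⁻_j P⁺_k)`
(the entries of the paper's cascade-condition matrix `D`). -/
theorem cascadeMap_hasDerivAt_zero
    (P Q ρ0 : ℕ → ℕ → ℝ) (M : ℕ → ℕ → ℕ)
    (hP : ∀ j k, 0 ≤ P j k) (hPsum : HasSum (fun p : ℕ × ℕ => P p.1 p.2) 1)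
    (hPplus : ∀ k, 0 < Pplus P k)
    (hQ : ∀ k j, 0 ≤ Q k j) (hQsum : HasSum (fun p : ℕ × ℕ => Q p.1 p.2) 1)
    (hQminus : ∀ j, 0 < Qminus Q j)
    (hρ0 : ∀ j k, ρ0 j k = 0)
    (hM : ∀ j k, 1 ≤ M j k) :
    ∀ j j' : ℕ,
      HasDerivAt
        (fun t : ℝ => cascadeMap P Q ρ0 M (fun i => if i = j' then t else 0) j)
        (∑' k, (j' : ℝ) * Q k j * P j' k * (if M j' k = 1 then (1 : ℝ) else 0)
          / (Qminus Q j * Pplus P k)) 0 :=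
  cascadeMap_hasDerivAt_zero_general P Q ρ0 M hP hPsum hQsum hρ0 hM
end

section
/- For every pair k, k' ∈ ℕ, the one-variable function t ↦ h_k(e + t·e_{k'}) (where e = (1,1,1,…) and e_{k'} ∈ ℝ^ℕ is the sequence equal to 1 in coordinate k' and 0 elsewhere, and h is evaluated by the same series formula for arguments near e) is differentiable at t = 0 with derivative D̃_{kk'} = Σ_{j'} k'·Q_{kj'}·P_{j'k'}·Γ_{j'k'} / (Q⁺_k·P⁻_{j'}). -/
/-- Out-degree marginal `P⁻_{j'} = Σ_{k'} P_{j'k'}` of the node-type distribution. -/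
noncomputable def Pminus (P : ℕ → ℕ → ℝ) (j' : ℕ) : ℝ := ∑' k', P j' k'

/-- Out-degree marginal `Q⁺_k = Σ_{j'} Q_{kj'}` of the edge-type distribution. -/
noncomputable def Qplus (Q : ℕ → ℕ → ℝ) (k : ℕ) : ℝ := ∑' j', Q k j'

/-- The percolation map `h` for the in-component of the giant vulnerable
cluster: `h_k(c) = Σ_{j',k'} (Γ_{j'k'} (c_{k'})^{k'} + (1 − Γ_{j'k'}))
· P_{j'k'} Q_{kj'} / (P⁻_{j'} Q⁺_k)` (with the convention `(c_0)^0 = 1`). -/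
noncomputable def percMap (P Q Γ : ℕ → ℕ → ℝ) (c : ℕ → ℝ) (k : ℕ) : ℝ :=
  ∑' (j' : ℕ) (k' : ℕ),
    (Γ j' k' * (c k') ^ k' + (1 - Γ j' k')) * P j' k' * Q k j'
      / (Pminus P j' * Qplus Q k)

/-!
Along the coordinate line through `e = (1,1,…)` only the `k'`-th powers vary, and the
row normalisations `Σ_{k''} P_{j'k''} = P⁻_{j'}`, `Σ_{j'} Q_{kj'} = Q⁺_k` collapse the rest, so
`h_k(e + t e_{k'}) = 1 + ((1 + t)^{k'} - 1) · Σ_{j'} Γ_{j'k'} P_{j'k'} Q_{kj'} / (P⁻_{j'} Q⁺_k)`,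
a polynomial in `t`. The column sum converges because `|Γ| ≤ 1` and `P_{j'k'} ≤ P⁻_{j'}` bound
its terms by `Q_{kj'} / Q⁺_k`.
-/

theorem summable_of_tsum_ne_zero {ι α : Type*} [AddCommMonoid α] [TopologicalSpace α]
    {f : ι → α} (h : ∑' i, f i ≠ 0) : Summable f := by
  by_contra hf
  exact h (tsum_eq_zero_of_not_summable hf)

section

variable {P Q Γ : ℕ → ℕ → ℝ}

theorem div_Pminus_le_one (hP : ∀ j' k', 0 ≤ P j' k') (hPminus : ∀ j', 0 < Pminus P j')
    (j' k' : ℕ) : P j' k' / Pminus P j' ≤ 1 :=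
  (div_le_one (hPminus j')).2 <|
    (summable_of_tsum_ne_zero (hPminus j').ne').le_tsum k' fun i _ => hP j' i

theorem summable_percMap_column (hP : ∀ j' k', 0 ≤ P j' k') (hPminus : ∀ j', 0 < Pminus P j')
    (hQ : ∀ k j', 0 ≤ Q k j') (hQplus : ∀ k, 0 < Qplus Q k) (hΓ : ∀ j' k', |Γ j' k'| ≤ 1)
    (k k' : ℕ) :
    Summable fun j' => Γ j' k' * P j' k' * Q k j' / (Pminus P j' * Qplus Q k) := by
  refine ((summable_of_tsum_ne_zero (hQplus k).ne').div_const (Qplus Q k)).of_norm_bounded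
    fun j' => ?_
  have hp : |P j' k' / Pminus P j'| ≤ 1 := by
    rw [abs_of_nonneg (div_nonneg (hP j' k') (hPminus j').le)]
    exact div_Pminus_le_one hP hPminus j' k'
  calc ‖Γ j' k' * P j' k' * Q k j' / (Pminus P j' * Qplus Q k)‖
      = |Γ j' k'| * |P j' k' / Pminus P j'| * (Q k j' / Qplus Q k) := by
        rw [Real.norm_eq_abs, abs_div, abs_mul, abs_mul, abs_mul, abs_div,
          abs_of_nonneg (hQ k j'), abs_of_pos (hQplus k)]
        field_simp
    _ ≤ Q k j' / Qplus Q k :=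
        mul_le_of_le_one_left (div_nonneg (hQ k j') (hQplus k).le)
          (mul_le_one₀ (hΓ j' k') (abs_nonneg _) hp)

theorem percMap_row_of_eq_one_off (hPminus : ∀ j', Pminus P j' ≠ 0) {c : ℕ → ℝ} {k' : ℕ}
    (hc : ∀ i ≠ k', c i = 1) (k j' : ℕ) :
    ∑' k'', (Γ j' k'' * c k'' ^ k'' + (1 - Γ j' k'')) * P j' k'' * Q k j'
        / (Pminus P j' * Qplus Q k)
      = Q k j' / Qplus Q k
        + (c k' ^ k' - 1) * (Γ j' k' * P j' k' * Q k j' / (Pminus P j' * Qplus Q k)) := by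
  have hsplit : ∀ k'', (Γ j' k'' * c k'' ^ k'' + (1 - Γ j' k'')) * P j' k'' * Q k j'
        / (Pminus P j' * Qplus Q k)
      = P j' k'' * (Q k j' / (Pminus P j' * Qplus Q k))
        + if k'' = k' then
            (c k' ^ k' - 1) * (Γ j' k' * P j' k' * Q k j' / (Pminus P j' * Qplus Q k))
          else 0 := by
    intro k''
    by_cases h : k'' = k'
    · subst h
      simp only [if_true]
      ring
    · simp only [if_neg h, hc k'' h, one_pow]
      ring
  rw [tsum_congr hsplit, (summable_of_tsum_ne_zero (hPminus j')).mul_right _ |>.tsum_add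
    (hasSum_ite_eq k' _).summable, tsum_mul_right, tsum_ite_eq, ← Pminus,
    ← mul_div_assoc, mul_div_mul_left _ _ (hPminus j')]

theorem percMap_of_eq_one_off (hP : ∀ j' k', 0 ≤ P j' k') (hPminus : ∀ j', 0 < Pminus P j')
    (hQ : ∀ k j', 0 ≤ Q k j') (hQplus : ∀ k, 0 < Qplus Q k) (hΓ : ∀ j' k', |Γ j' k'| ≤ 1)
    {c : ℕ → ℝ} {k' : ℕ} (hc : ∀ i ≠ k', c i = 1) (k : ℕ) :
    percMap P Q Γ c k
      = 1 + (c k' ^ k' - 1) * ∑' j', Γ j' k' * P j' k' * Q k j' / (Pminus P j' * Qplus Q k) := by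
  rw [percMap, tsum_congr (percMap_row_of_eq_one_off (fun j' => (hPminus j').ne') hc k),
    ((summable_of_tsum_ne_zero (hQplus k).ne').div_const _).tsum_add
      ((summable_percMap_column hP hPminus hQ hQplus hΓ k k').mul_left _),
    tsum_div_const, tsum_mul_left, ← Qplus, div_self (hQplus k).ne']

end

/-- The percolation map `h` is differentiable at the trivial fixed point
`e = (1,1,…)` along each coordinate direction `e_{k'}`, with derivative
`D̃_{kk'} = Σ_{j'} k' Q_{kj'} P_{j'k'} Γ_{j'k'} / (Q⁺_k P⁻_{j'})`. -/
theorem percMap_hasDerivAt_one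
    (P Q Γ : ℕ → ℕ → ℝ)
    (hP : ∀ j' k', 0 ≤ P j' k') (hPminus : ∀ j', 0 < Pminus P j')
    (hQ : ∀ k j', 0 ≤ Q k j') (hQplus : ∀ k, 0 < Qplus Q k)
    (hΓ : ∀ j' k', Γ j' k' = 0 ∨ Γ j' k' = 1) :
    ∀ k k' : ℕ,
      HasDerivAt
        (fun t : ℝ => percMap P Q Γ (fun i => 1 + if i = k' then t else 0) k)
        (∑' j', (k' : ℝ) * Q k j' * P j' k' * Γ j' k'
          / (Qplus Q k * Pminus P j')) 0 := by
  intro k k'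
  have hΓ_abs : ∀ j' k', |Γ j' k'| ≤ 1 := fun j' k' => by rcases hΓ j' k' with h | h <;> simp [h]
  set B := ∑' j', Γ j' k' * P j' k' * Q k j' / (Pminus P j' * Qplus Q k)
  have hline : (fun t : ℝ => percMap P Q Γ (fun i => 1 + if i = k' then t else 0) k)
      = fun t => 1 + ((1 + t) ^ k' - 1) * B := by
    funext t
    rw [percMap_of_eq_one_off hP hPminus hQ hQplus hΓ_abs (k' := k') (by intro i hi; simp [hi])]
    simp only [↓reduceIte, B]
  have hcolumn : ∑' j', (k' : ℝ) * Q k j' * P j' k' * Γ j' k' / (Qplus Q k * Pminus P j')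
      = k' * B := by
    rw [← tsum_mul_left]
    exact tsum_congr fun j' => by ring
  rw [hline, hcolumn]
  have hpow : HasDerivAt (fun t : ℝ => (1 + t) ^ k') (k' * (1 + 0) ^ (k' - 1) * 1) 0 :=
    ((hasDerivAt_id 0).const_add 1).pow k'
  simpa using ((hpow.sub_const 1).mul_const B).const_add 1
end
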